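/- Let σ be continuous and positive, S continuous, G(S) < ∞, f_S the invariant density, F measurable with ∫_ℝ |F| f_S < ∞, ϑ = ∫_ℝ F f_S, M(y) = ∫_{-∞}^y (F(v) − ϑ) f_S(v) dv, and suppose J := ∫_ℝ M(y)²/(σ(y)² f_S(y)) dy is finite and positive. Define ψ_*(v) = C·M(v)/(σ(v)² f_S(v)) with C = −(2J)^{-1}. Then ψ_* satisfies the constraint −∫_ℝ M(y) ψ_*(y) dy = 1/2 and achieves equality: ∫_ℝ ψ_*(y)² σ(y)² f_S(y) dy = I_* = (4J)^{-1}. -/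

import Mathlib

/-! `ψ_*` is proportional to the integrand of `J`: pointwise, `M ψ_* = C · M²/(σ² f_S)` and
`ψ_*² σ² f_S = C² · M²/(σ² f_S)`, so the two integrals are `C J` and `C² J`, and
`C = -(2J)⁻¹` turns them into `-1/2` and `(4J)⁻¹`. -/

open MeasureTheory

theorem div_sq_mul_self {K : Type*} [Field K] (a d : K) : (a / d) ^ 2 * d = a ^ 2 / d := by
  rcases eq_or_ne d 0 with rfl | hd
  · simp
  · field_simp

theorem moment_estimation_stmt5
    (σ : ℝ → ℝ)
    (fS : ℝ → ℝ)
    (M : ℝ → ℝ)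
    (J : ℝ) (hJ : J = ∫ y : ℝ, (M y) ^ 2 / ((σ y) ^ 2 * fS y))
    (hJpos : 0 < J)
    (C : ℝ) (hC : C = -(2 * J)⁻¹)
    (ψstar : ℝ → ℝ)
    (hψstar : ∀ v, ψstar v = C * M v / ((σ v) ^ 2 * fS v)) :
    (- ∫ y : ℝ, M y * ψstar y) = 1 / 2 ∧
      ∫ y : ℝ, (ψstar y) ^ 2 * (σ y) ^ 2 * fS y = (4 * J)⁻¹ := by
  have hMψ : ∀ y, M y * ψstar y = C * (M y ^ 2 / (σ y ^ 2 * fS y)) := fun y => by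
    rw [hψstar]
    ring
  have hψsq : ∀ y, ψstar y ^ 2 * σ y ^ 2 * fS y = C ^ 2 * (M y ^ 2 / (σ y ^ 2 * fS y)) :=
    fun y => by rw [hψstar, mul_assoc, div_sq_mul_self, mul_pow, mul_div_assoc]
  simp only [hMψ, hψsq, integral_const_mul]
  rw [← hJ, hC]
  constructor
  · field_simp
  · field_simp
    norm_num
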